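/- The minimum Euclidean distance between two disjoint line segments whose endpoints belong to {0,1}^d (for any d ≥ 3) is 1/√6, achieved by a diagonal of the cube [0,1]^3 and a diagonal of one of its square faces. -/

import Mathlib

/-!
Parametrise the two segments as `x(t) = lineMap u v t` and `y(s) = lineMap u' v' s`. Swapping the
endpoints of a segment or the two segments reduces to `0 ≤ t ≤ s ≤ 1/2`. There, coordinate by
coordinate (only 16 cases, each coordinate being 0 or 1),
`‖x(t) - y(s)‖² ≥ (1-t-s)²‖u - u'‖² + (s-t)²‖u - v'‖² + t²‖(u + v) - (u' + v')‖²`.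
Disjointness makes `u ≠ u'`, `u ≠ v'` and (comparing midpoints) `u + v ≠ u' + v'`; these are
distinct integer points, so each of the three squared norms is at least 1, and
`(1-t-s)² + (s-t)² + t² = 1/6 + 3(t - 1/3)² + 2(s - 1/2)² ≥ 1/6`.
Equality holds for the diagonal from `0` to `e₀ + e₁ + e₂` and the face diagonal from `e₀` to
`e₁`, at `t = 1/3`, `s = 1/2`.
-/

open AffineMap Finset

lemma sq_lineMap_sub_lineMap_ge_of_binary {a b c e t s : ℝ}
    (ha : a = 0 ∨ a = 1) (hb : b = 0 ∨ b = 1) (hc : c = 0 ∨ c = 1) (he : e = 0 ∨ e = 1)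
    (ht : 0 ≤ t) (hts : t ≤ s) (hs : s ≤ 1 / 2) :
    (1 - t - s) ^ 2 * (a - c) ^ 2 + (s - t) ^ 2 * (a - e) ^ 2 + t ^ 2 * (a + b - (c + e)) ^ 2 ≤
      ((1 - t) * a + t * b - ((1 - s) * c + s * e)) ^ 2 := by
  have := mul_nonneg ht (sub_nonneg.2 hts)
  rcases ha with rfl | rfl <;> rcases hb with rfl | rfl <;> rcases hc with rfl | rfl <;>
    rcases he with rfl | rfl <;> nlinarith

section LowerBound

variable {ι : Type*} [Fintype ι]

lemma one_le_norm_sq_of_forall_mem_bot {x : EuclideanSpace ℝ ι}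
    (hx : ∀ i, x i ∈ (⊥ : Subring ℝ)) (h0 : x ≠ 0) : 1 ≤ ‖x‖ ^ 2 := by
  obtain ⟨i, hi⟩ : ∃ i, x i ≠ 0 := by
    by_contra! h
    exact h0 (PiLp.ext h)
  obtain ⟨n, hn⟩ := Subring.mem_bot.1 (hx i)
  have hn0 : n ≠ 0 := by rintro rfl; simp [← hn] at hi
  calc (1 : ℝ) ≤ x i ^ 2 := by
        rw [← hn, one_le_sq_iff_one_le_abs]; exact_mod_cast Int.one_le_abs hn0
    _ ≤ ‖x‖ ^ 2 := by
      rw [EuclideanSpace.real_norm_sq_eq]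
      exact single_le_sum (f := fun j => x j ^ 2) (fun j _ => sq_nonneg _) (mem_univ i)

variable {u v u' v' : EuclideanSpace ℝ ι}

lemma norm_sq_lineMap_sub_lineMap_ge
    (hu : ∀ i, u i = 0 ∨ u i = 1) (hv : ∀ i, v i = 0 ∨ v i = 1)
    (hu' : ∀ i, u' i = 0 ∨ u' i = 1) (hv' : ∀ i, v' i = 0 ∨ v' i = 1)
    {t s : ℝ} (ht : 0 ≤ t) (hts : t ≤ s) (hs : s ≤ 1 / 2) :
    (1 - t - s) ^ 2 * ‖u - u'‖ ^ 2 + (s - t) ^ 2 * ‖u - v'‖ ^ 2 +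
        t ^ 2 * ‖(u + v) - (u' + v')‖ ^ 2 ≤ ‖lineMap u v t - lineMap u' v' s‖ ^ 2 := by
  simp only [EuclideanSpace.real_norm_sq_eq, mul_sum, ← sum_add_distrib]
  refine sum_le_sum fun i _ => ?_
  simpa [lineMap_apply_module] using
    sq_lineMap_sub_lineMap_ge_of_binary (hu i) (hv i) (hu' i) (hv' i) ht hts hs

lemma inv_six_le_norm_sq_lineMap_sub_lineMap_of_le
    (hu : ∀ i, u i = 0 ∨ u i = 1) (hv : ∀ i, v i = 0 ∨ v i = 1)
    (hu' : ∀ i, u' i = 0 ∨ u' i = 1) (hv' : ∀ i, v' i = 0 ∨ v' i = 1)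
    (hdisj : Disjoint (segment ℝ u v) (segment ℝ u' v'))
    {t s : ℝ} (ht : 0 ≤ t) (hts : t ≤ s) (hs : s ≤ 1 / 2) :
    1 / 6 ≤ ‖lineMap u v t - lineMap u' v' s‖ ^ 2 := by
  have mem_bot {x : EuclideanSpace ℝ ι} (hx : ∀ i, x i = 0 ∨ x i = 1) (i : ι) :
      x i ∈ (⊥ : Subring ℝ) := (hx i).elim (· ▸ zero_mem _) (· ▸ one_mem _)
  have huu' : 1 ≤ ‖u - u'‖ ^ 2 :=
    one_le_norm_sq_of_forall_mem_bot (fun i => sub_mem (mem_bot hu i) (mem_bot hu' i))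
      (sub_ne_zero.2 (hdisj.ne_of_mem (left_mem_segment ℝ u v) (left_mem_segment ℝ u' v')))
  have huv' : 1 ≤ ‖u - v'‖ ^ 2 :=
    one_le_norm_sq_of_forall_mem_bot (fun i => sub_mem (mem_bot hu i) (mem_bot hv' i))
      (sub_ne_zero.2 (hdisj.ne_of_mem (left_mem_segment ℝ u v) (right_mem_segment ℝ u' v')))
  have hsum : 1 ≤ ‖(u + v) - (u' + v')‖ ^ 2 := by
    refine one_le_norm_sq_of_forall_mem_bot (fun i => ?_) (sub_ne_zero.2 fun h => ?_)
    · simpa using sub_mem (add_mem (mem_bot hu i) (mem_bot hv i))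
        (add_mem (mem_bot hu' i) (mem_bot hv' i))
    · refine hdisj.ne_of_mem (midpoint_mem_segment u v) (midpoint_mem_segment u' v') ?_
      rw [midpoint_eq_smul_add, midpoint_eq_smul_add, h]
  calc (1 : ℝ) / 6 ≤ (1 - t - s) ^ 2 * 1 + (s - t) ^ 2 * 1 + t ^ 2 * 1 := by
        nlinarith [sq_nonneg (t - 1 / 3), sq_nonneg (s - 1 / 2)]
    _ ≤ (1 - t - s) ^ 2 * ‖u - u'‖ ^ 2 + (s - t) ^ 2 * ‖u - v'‖ ^ 2 +
        t ^ 2 * ‖(u + v) - (u' + v')‖ ^ 2 := by gcongr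
    _ ≤ _ := norm_sq_lineMap_sub_lineMap_ge hu hv hu' hv' ht hts hs

lemma inv_six_le_norm_sq_lineMap_sub_lineMap
    (hu : ∀ i, u i = 0 ∨ u i = 1) (hv : ∀ i, v i = 0 ∨ v i = 1)
    (hu' : ∀ i, u' i = 0 ∨ u' i = 1) (hv' : ∀ i, v' i = 0 ∨ v' i = 1)
    (hdisj : Disjoint (segment ℝ u v) (segment ℝ u' v'))
    {t s : ℝ} (ht₀ : 0 ≤ t) (ht₁ : t ≤ 1) (hs₀ : 0 ≤ s) (hs₁ : s ≤ 1) :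
    1 / 6 ≤ ‖lineMap u v t - lineMap u' v' s‖ ^ 2 := by
  wlog hs : s ≤ 1 / 2 generalizing u' v' s
  · have := this (hu' := hv') (hv' := hu') (hdisj := segment_symm ℝ u' v' ▸ hdisj) (s := 1 - s)
      (by linarith) (by linarith) (by linarith)
    rwa [lineMap_apply_one_sub] at this
  wlog ht : t ≤ 1 / 2 generalizing u v t
  · have := this (hu := hv) (hv := hu) (hdisj := segment_symm ℝ u v ▸ hdisj) (t := 1 - t)
      (by linarith) (by linarith) (by linarith)
    rwa [lineMap_apply_one_sub] at this
  wlog hts : t ≤ s generalizing u v u' v' t s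
  · have := this (hu := hu') (hv := hv') (hu' := hu) (hv' := hv) (hdisj := hdisj.symm)
      (ht₀ := hs₀) (ht₁ := hs₁) (hs₀ := ht₀) (hs₁ := ht₁) (hs := ht) (ht := hs) (le_of_not_ge hts)
    rwa [← norm_neg, neg_sub] at this
  exact inv_six_le_norm_sq_lineMap_sub_lineMap_of_le hu hv hu' hv' hdisj ht₀ hts hs

lemma one_div_sqrt_six_le_sInf_dist
    (hu : ∀ i, u i = 0 ∨ u i = 1) (hv : ∀ i, v i = 0 ∨ v i = 1)
    (hu' : ∀ i, u' i = 0 ∨ u' i = 1) (hv' : ∀ i, v' i = 0 ∨ v' i = 1)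
    (hdisj : Disjoint (segment ℝ u v) (segment ℝ u' v')) :
    1 / √6 ≤ sInf (Set.image2 dist (segment ℝ u v) (segment ℝ u' v')) := by
  refine le_csInf (Set.Nonempty.image2 ⟨u, left_mem_segment ℝ u v⟩ ⟨u', left_mem_segment ℝ u' v'⟩)
    (Set.forall_mem_image2.2 fun x hx y hy => ?_)
  rw [segment_eq_image_lineMap] at hx hy
  obtain ⟨t, ⟨ht₀, ht₁⟩, rfl⟩ := hx
  obtain ⟨s, ⟨hs₀, hs₁⟩, rfl⟩ := hy
  rw [dist_eq_norm, one_div, ← Real.sqrt_inv, ← Real.sqrt_sq (norm_nonneg _)]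
  exact Real.sqrt_le_sqrt (by simpa using
    inv_six_le_norm_sq_lineMap_sub_lineMap hu hv hu' hv' hdisj ht₀ ht₁ hs₀ hs₁)

end LowerBound

section Extremal

variable {ι : Type*} [DecidableEq ι]

def cubeVertex (S : Finset ι) : EuclideanSpace ℝ ι :=
  WithLp.toLp 2 fun i => if i ∈ S then 1 else 0

@[simp]
lemma cubeVertex_apply (S : Finset ι) (i : ι) : cubeVertex S i = if i ∈ S then 1 else 0 := rfl

lemma cubeVertex_apply_eq_zero_or_one (S : Finset ι) (i : ι) :
    cubeVertex S i = 0 ∨ cubeVertex S i = 1 := by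
  by_cases hi : i ∈ S <;> simp [hi]

lemma cubeVertex_injective : Function.Injective (cubeVertex : Finset ι → _) := by
  intro S T h
  ext i
  have : cubeVertex S i = cubeVertex T i := by rw [h]
  by_cases hS : i ∈ S <;> by_cases hT : i ∈ T <;> simp [hS, hT] at this ⊢

variable {i j k : ι}

lemma disjoint_segment_cubeVertex (hij : i ≠ j) (hik : i ≠ k) (hjk : j ≠ k) :
    Disjoint (segment ℝ (cubeVertex ∅) (cubeVertex {i, j, k}))
      (segment ℝ (cubeVertex {i}) (cubeVertex {j})) := by
  rw [Set.disjoint_left, segment_eq_image_lineMap, segment_eq_image_lineMap]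
  rintro _ ⟨t, -, rfl⟩ ⟨s, -, h⟩
  -- `z ↦ z i + z j - 2 z k` vanishes on the first segment and is `1` on the second
  have := congr_arg (fun z : EuclideanSpace ℝ ι => z i + z j - 2 * z k) h
  simp [lineMap_apply_module, hij, hik, hjk, hij.symm, hik.symm, hjk.symm] at this
  linarith

variable [Fintype ι]

lemma dist_lineMap_cubeVertex_midpoint (hij : i ≠ j) (hik : i ≠ k) (hjk : j ≠ k) :
    dist (lineMap (cubeVertex ∅) (cubeVertex {i, j, k}) (1 / 3 : ℝ))
      (midpoint ℝ (cubeVertex {i}) (cubeVertex {j})) = 1 / √6 := by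
  rw [dist_eq_norm, ← Real.sqrt_sq (norm_nonneg _), EuclideanSpace.real_norm_sq_eq,
    ← sum_subset (subset_univ {i, j, k})]
  · simp [lineMap_apply_module, midpoint_eq_smul_add, sum_insert, hij, hik, hjk, hij.symm,
      hik.symm, hjk.symm]
    norm_num
  · intro l _ hl
    simp_all [lineMap_apply_module, midpoint_eq_smul_add]

lemma sInf_dist_segment_cubeVertex (hij : i ≠ j) (hik : i ≠ k) (hjk : j ≠ k) :
    sInf (Set.image2 dist (segment ℝ (cubeVertex ∅) (cubeVertex {i, j, k}))
      (segment ℝ (cubeVertex {i}) (cubeVertex {j}))) = 1 / √6 := by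
  refine le_antisymm ?_ (one_div_sqrt_six_le_sInf_dist (cubeVertex_apply_eq_zero_or_one _)
    (cubeVertex_apply_eq_zero_or_one _) (cubeVertex_apply_eq_zero_or_one _)
    (cubeVertex_apply_eq_zero_or_one _) (disjoint_segment_cubeVertex hij hik hjk))
  refine csInf_le ⟨0, Set.forall_mem_image2.2 fun _ _ _ _ => dist_nonneg⟩ ?_
  rw [← dist_lineMap_cubeVertex_midpoint hij hik hjk]
  exact Set.mem_image2_of_mem (lineMap_mem_segment ℝ _ _ ⟨by norm_num, by norm_num⟩)
    (midpoint_mem_segment _ _)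

end Extremal

theorem stmt_8 (d : ℕ) (hd : 3 ≤ d) :
    IsLeast {r : ℝ | ∃ u v u' v' : EuclideanSpace ℝ (Fin d),
      (∀ i, u i = 0 ∨ u i = 1) ∧ (∀ i, v i = 0 ∨ v i = 1) ∧
      (∀ i, u' i = 0 ∨ u' i = 1) ∧ (∀ i, v' i = 0 ∨ v' i = 1) ∧
      u ≠ v ∧ u' ≠ v' ∧
      segment ℝ u v ∩ segment ℝ u' v' = ∅ ∧
      r = sInf (Set.image2 dist (segment ℝ u v) (segment ℝ u' v'))}
      (1 / Real.sqrt 6) := by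
  refine ⟨?_, ?_⟩
  · let i : Fin d := ⟨0, by omega⟩
    let j : Fin d := ⟨1, by omega⟩
    let k : Fin d := ⟨2, by omega⟩
    have hij : i ≠ j := by simp [i, j]
    have hik : i ≠ k := by simp [i, k]
    have hjk : j ≠ k := by simp [j, k]
    exact ⟨cubeVertex ∅, cubeVertex {i, j, k}, cubeVertex {i}, cubeVertex {j},
      cubeVertex_apply_eq_zero_or_one _, cubeVertex_apply_eq_zero_or_one _,
      cubeVertex_apply_eq_zero_or_one _, cubeVertex_apply_eq_zero_or_one _,
      cubeVertex_injective.ne (insert_nonempty _ _).ne_empty.symm, cubeVertex_injective.ne (by simpa using hij),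
      Set.disjoint_iff_inter_eq_empty.1 (disjoint_segment_cubeVertex hij hik hjk),
      (sInf_dist_segment_cubeVertex hij hik hjk).symm⟩
  · rintro r ⟨u, v, u', v', hu, hv, hu', hv', -, -, hdisj, rfl⟩
    exact one_div_sqrt_six_le_sInf_dist hu hv hu' hv' (Set.disjoint_iff_inter_eq_empty.2 hdisj)
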